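/- For all nonnegative integers n and d, the evaluation of the polynomial det(M_d) ∈ ℤ[x] at x = n is nonzero; equivalently, the integer matrix [λ_{μ,ν}(n)]_{μ ∈ Λ_{d,n}, ν ∈ Λ*_{d,n}} is invertible. -/
import Mathlib


open Finset Polynomial

namespace Capelli

/-- The set `ℙ_{k,n}` of pairs `μ = (μ₁, μ₂)` of nonnegative integers with `μ₁ ≥ μ₂`,
`μ₁ + μ₂ = k` and `μ₂ ≤ n`. -/
def Pkn (n k : ℕ) : Finset (ℕ × ℕ) :=
  (Finset.range (k + 1) ×ˢ Finset.range (k + 1)).filter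
    (fun μ => μ.2 ≤ μ.1 ∧ μ.1 + μ.2 = k ∧ μ.2 ≤ n)

/-- The set `ℙ*_{k,n}` of pairs `ν = (ν₁, ν₂)` of nonnegative integers with `ν₁ ≥ ν₂`,
`ν₁ + ν₂ = k` and `ν₂ ≥ ⌊k/2⌋ - n` (written here additively to avoid truncated subtraction). -/
def PknStar (n k : ℕ) : Finset (ℕ × ℕ) :=
  (Finset.range (k + 1) ×ˢ Finset.range (k + 1)).filter
    (fun ν => ν.2 ≤ ν.1 ∧ ν.1 + ν.2 = k ∧ k / 2 ≤ ν.2 + n)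

/-- `Λ_{d,n} = ⋃_{k=0}^d ℙ_{k,n}`. -/
def Lam (n d : ℕ) : Finset (ℕ × ℕ) := (Finset.range (d + 1)).biUnion (Pkn n)

/-- `Λ*_{d,n} = ⋃_{k=0}^d ℙ*_{k,n}`. -/
def LamStar (n d : ℕ) : Finset (ℕ × ℕ) := (Finset.range (d + 1)).biUnion (PknStar n)

/-- `ℓ_ν = min(ν₁ - ν₂, 2n + 1 - (ν₁ - ν₂))`. -/
def ell (n : ℕ) (ν : ℕ × ℕ) : ℕ := min (ν.1 - ν.2) (2 * n + 1 - (ν.1 - ν.2))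

/-- `Λ_{d,n,j} = {μ ∈ Λ_{d,n} : μ₂ ≥ j}`. -/
def Lamj (n d j : ℕ) : Finset (ℕ × ℕ) := (Lam n d).filter (fun μ => j ≤ μ.2)

/-- `Λ*_{d,n,j} = {ν ∈ Λ*_{d,n} : ν₂ ≤ ⌊|ν|/2⌋ - j}`. -/
def LamStarj (n d j : ℕ) : Finset (ℕ × ℕ) :=
  (LamStar n d).filter (fun ν => ν.2 + j ≤ (ν.1 + ν.2) / 2)

/-- `ν_{(j)} = (|ν| - ⌊|ν|/2⌋ + j, ⌊|ν|/2⌋ - j)`. -/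
def nuSub (ν : ℕ × ℕ) (j : ℕ) : ℕ × ℕ :=
  (ν.1 + ν.2 - (ν.1 + ν.2) / 2 + j, (ν.1 + ν.2) / 2 - j)

/-- The polynomial `λ_{μ,ν}(x) = ((2x+1)ℓ_ν - ℓ_ν²)^{μ₂} (ν₁+ν₂)^{μ₁-μ₂} ∈ ℤ[x]`. -/
noncomputable def lamPoly (n : ℕ) (μ ν : ℕ × ℕ) : Polynomial ℤ :=
  ((2 * X + 1) * C (ell n ν : ℤ) - C ((ell n ν : ℤ) ^ 2)) ^ μ.2 *
    C ((ν.1 + ν.2 : ℕ) : ℤ) ^ (μ.1 - μ.2)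

/-- The row ordering: `μ ⪯ μ'` iff `μ₂ < μ₂'`, or `μ₂ = μ₂'` and `μ₁ ≤ μ₁'`. -/
def rowRel (μ μ' : ℕ × ℕ) : Prop := μ.2 < μ'.2 ∨ (μ.2 = μ'.2 ∧ μ.1 ≤ μ'.1)

/-- The column ordering: `ν ⩽ ν'` iff `⌊(ν₁-ν₂)/2⌋ < ⌊(ν₁'-ν₂')/2⌋`, or these are equal and
`|ν| ≤ |ν'|`.  (A further tie-break by the first coordinate is added so that the relation is
antisymmetric on all of `ℕ × ℕ`; on `Λ*_{d,n}` a tie in the first two comparisons forces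
equality, so this agrees with the ordering of the paper there.) -/
def colRel (ν ν' : ℕ × ℕ) : Prop :=
  (ν.1 - ν.2) / 2 < (ν'.1 - ν'.2) / 2 ∨
    ((ν.1 - ν.2) / 2 = (ν'.1 - ν'.2) / 2 ∧
      (ν.1 + ν.2 < ν'.1 + ν'.2 ∨ (ν.1 + ν.2 = ν'.1 + ν'.2 ∧ ν.1 ≤ ν'.1)))

instance : DecidableRel rowRel := fun a b =>
  inferInstanceAs (Decidable (a.2 < b.2 ∨ (a.2 = b.2 ∧ a.1 ≤ b.1)))

instance : IsTrans (ℕ × ℕ) rowRel := ⟨by intro a b c; unfold rowRel; omega⟩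

instance : IsTotal (ℕ × ℕ) rowRel := ⟨by intro a b; unfold rowRel; omega⟩

instance : IsAntisymm (ℕ × ℕ) rowRel :=
  ⟨by intro a b h1 h2; unfold rowRel at h1 h2; rw [Prod.ext_iff]; omega⟩

instance : DecidableRel colRel := fun a b =>
  inferInstanceAs (Decidable ((a.1 - a.2) / 2 < (b.1 - b.2) / 2 ∨
    ((a.1 - a.2) / 2 = (b.1 - b.2) / 2 ∧
      (a.1 + a.2 < b.1 + b.2 ∨ (a.1 + a.2 = b.1 + b.2 ∧ a.1 ≤ b.1)))))

instance : IsTrans (ℕ × ℕ) colRel := ⟨by intro a b c; unfold colRel; omega⟩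

instance : IsTotal (ℕ × ℕ) colRel := ⟨by intro a b; unfold colRel; omega⟩

instance : IsAntisymm (ℕ × ℕ) colRel :=
  ⟨by intro a b h1 h2; unfold colRel at h1 h2; rw [Prod.ext_iff]; omega⟩

/-- The elements of `Λ_{d,n}` listed in increasing order for `⪯`. -/
def rowList (n d : ℕ) : List (ℕ × ℕ) := (Lam n d).sort rowRel

/-- The elements of `Λ*_{d,n}` listed in increasing order for `⩽`. -/
def colList (n d : ℕ) : List (ℕ × ℕ) := (LamStar n d).sort colRel

/-- The elements of `Λ_{d,n,j}` listed in increasing order for `⪯`. -/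
def rowListJ (n d j : ℕ) : List (ℕ × ℕ) := (Lamj n d j).sort rowRel

/-- The elements of `Λ*_{d,n,j}` listed in increasing order for `⩽`. -/
def colListJ (n d j : ℕ) : List (ℕ × ℕ) := (LamStarj n d j).sort colRel

/-- The matrix `M_d = [λ_{μ,ν}]` with rows indexed by `Λ_{d,n}` (ordered by `⪯`) and columns
indexed by `Λ*_{d,n}` (ordered by `⩽`); since `|Λ_{d,n}| = |Λ*_{d,n}|` the column list has
length `(Lam n d).card` and the `getD` access below always hits an actual entry. -/
noncomputable def Md (n d : ℕ) : Matrix (Fin (Lam n d).card) (Fin (Lam n d).card) (Polynomial ℤ) :=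
  fun i j => lamPoly n ((rowList n d).getD i.val (0, 0)) ((colList n d).getD j.val (0, 0))

/-- The matrix `M_d' = [(2ℓ_ν)^{μ₂}(ν₁+ν₂)^{μ₁-μ₂}]` of leading coefficients. -/
def Md' (n d : ℕ) : Matrix (Fin (Lam n d).card) (Fin (Lam n d).card) ℤ :=
  fun i j =>
    let μ := (rowList n d).getD i.val (0, 0)
    let ν := (colList n d).getD j.val (0, 0)
    (2 * (ell n ν : ℤ)) ^ μ.2 * ((ν.1 + ν.2 : ℕ) : ℤ) ^ (μ.1 - μ.2)

/-- `S_{μ,ν,j}` with `m = μ₂ - j`: the complete homogeneous symmetric polynomial of degree `m`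
evaluated at `ℓ_{ν_{(0)}}, …, ℓ_{ν_{(j-1)}}, ℓ_ν`, i.e. the sum over all `(j+1)`-tuples
`(a₀, …, a_j)` of nonnegative integers with `a₀ + ⋯ + a_j = m` of
`ℓ_{ν_{(0)}}^{a₀} ⋯ ℓ_{ν_{(j-1)}}^{a_{j-1}} ℓ_ν^{a_j}`. -/
def Shs (n : ℕ) (ν : ℕ × ℕ) (j m : ℕ) : ℕ :=
  ∑ a ∈ Finset.Nat.antidiagonalTuple (j + 1) m,
    ∏ i : Fin (j + 1), (if (i : ℕ) < j then ell n (nuSub ν (i : ℕ)) else ell n ν) ^ a i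

/-- The matrix `N_j = [2^{μ₂-j}(ν₁+ν₂)^{μ₁-μ₂} S_{μ,ν,j}]` with rows indexed by `Λ_{d,n,j}`
(ordered by `⪯`) and columns indexed by `Λ*_{d,n,j}` (ordered by `⩽`). -/
def Ndj (n d j : ℕ) : Matrix (Fin (Lamj n d j).card) (Fin (Lamj n d j).card) ℤ :=
  fun i i' =>
    let μ := (rowListJ n d j).getD i.val (0, 0)
    let ν := (colListJ n d j).getD i'.val (0, 0)
    2 ^ (μ.2 - j) * ((ν.1 + ν.2 : ℕ) : ℤ) ^ (μ.1 - μ.2) * (Shs n ν j (μ.2 - j) : ℤ)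

/-- The Vandermonde matrix `V(a, a+1, …, a+s-1) = [(a+j)^{i-1}]_{1 ≤ i,j ≤ s}` (0-indexed
as `[(a+j)^i]_{0 ≤ i,j ≤ s-1}`), with the convention `0⁰ = 1`. -/
def vandInt (a s : ℕ) : Matrix (Fin s) (Fin s) ℤ :=
  fun i j => ((a + (j : ℕ) : ℕ) : ℤ) ^ (i : ℕ)

/-- `f(d,s) = #{(ν,ν') ∈ Λ*_{d,n} × Λ*_{d,n} : |ν| = |ν'|, ℓ_{ν'} < ℓ_ν, ℓ_ν + ℓ_{ν'} - 1 = s}`. -/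
def fds (n d : ℕ) (s : ℤ) : ℕ :=
  (((LamStar n d) ×ˢ (LamStar n d)).filter
    (fun p => p.1.1 + p.1.2 = p.2.1 + p.2.2 ∧ ell n p.2 < ell n p.1 ∧
      (ell n p.1 : ℤ) + (ell n p.2 : ℤ) - 1 = s)).card

/-- `g_k(s) = #{(ν,ν') ∈ ℙ*_{k,n} × ℙ*_{k,n} : ℓ_{ν'} < ℓ_ν, ℓ_ν + ℓ_{ν'} - 1 = s}`. -/
def gks (n k : ℕ) (s : ℤ) : ℕ :=
  ((PknStar n k ×ˢ PknStar n k).filter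
    (fun p => ell n p.2 < ell n p.1 ∧ (ell n p.1 : ℤ) + (ell n p.2 : ℤ) - 1 = s)).card


/- ===== auxiliary lemmas added for the proof ===== -/

lemma mem_Lam {n d : ℕ} {μ : ℕ × ℕ} :
    μ ∈ Lam n d ↔ μ.2 ≤ μ.1 ∧ μ.1 + μ.2 ≤ d ∧ μ.2 ≤ n := by
  simp only [Lam, Pkn, Finset.mem_biUnion, Finset.mem_range, Finset.mem_filter,
    Finset.mem_product]
  constructor
  · rintro ⟨k, hk, ⟨h1, h2⟩, h3, h4, h5⟩; omega
  · rintro ⟨h1, h2, h3⟩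
    exact ⟨μ.1 + μ.2, by omega, ⟨by omega, by omega⟩, h1, rfl, h3⟩

lemma mem_LamStar {n d : ℕ} {ν : ℕ × ℕ} :
    ν ∈ LamStar n d ↔ ν.2 ≤ ν.1 ∧ ν.1 + ν.2 ≤ d ∧ (ν.1 + ν.2) / 2 ≤ ν.2 + n := by
  simp only [LamStar, PknStar, Finset.mem_biUnion, Finset.mem_range, Finset.mem_filter,
    Finset.mem_product]
  constructor
  · rintro ⟨k, hk, ⟨h1, h2⟩, h3, h4, h5⟩; omega
  · rintro ⟨h1, h2, h3⟩
    exact ⟨ν.1 + ν.2, by omega, ⟨by omega, by omega⟩, h1, rfl, h3⟩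

lemma card_LamStar (n d : ℕ) : (LamStar n d).card = (Lam n d).card := by
  apply Finset.card_bij
    (fun ν _ => (ν.1 + ν.2 - ((ν.1 + ν.2) / 2 - ν.2), (ν.1 + ν.2) / 2 - ν.2))
  · intro ν hν
    rw [mem_LamStar] at hν
    rw [mem_Lam]
    refine ⟨by omega, by omega, by omega⟩
  · intro a ha b hb h
    rw [mem_LamStar] at ha hb
    rw [Prod.ext_iff] at h ⊢
    obtain ⟨h1, h2⟩ := h
    dsimp at h1 h2 ⊢
    omega
  · intro μ hμ
    rw [mem_Lam] at hμ
    refine ⟨(μ.1 + μ.2 - ((μ.1 + μ.2) / 2 - μ.2), (μ.1 + μ.2) / 2 - μ.2), ?_, ?_⟩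
    · rw [mem_LamStar]; dsimp; omega
    · rw [Prod.ext_iff]; dsimp; omega

/-- The key quadratic identity: for `t ≤ 2n+1` and `ℓ = min t (2n+1-t)` one has
`(2n+1)ℓ - ℓ² = t(2n+1-t)` over `ℚ`. -/
lemma cval_eq (n t : ℕ) (ht : t ≤ 2 * n + 1) :
    (2 * (n : ℚ) + 1) * ((min t (2 * n + 1 - t) : ℕ) : ℚ)
      - ((min t (2 * n + 1 - t) : ℕ) : ℚ) ^ 2
      = (t : ℚ) * ((2 * (n : ℚ) + 1) - (t : ℚ)) := by
  rcases Nat.le_total t (2 * n + 1 - t) with h | h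
  · rw [min_eq_left h]; ring
  · rw [min_eq_right h]
    have h2 : (((2 * n + 1 - t : ℕ)) : ℚ) = 2 * (n : ℚ) + 1 - t := by
      rw [Nat.cast_sub ht]; push_cast; ring
    rw [h2]; ring

lemma det_map_Md_ne_zero (n d : ℕ) :
    ((Md n d).map (fun p => ((p.eval (n : ℤ) : ℤ) : ℚ))).det ≠ 0 := by
  classical
  intro hdet
  set N := (Lam n d).card with hN
  obtain ⟨v, hv0, hv⟩ := Matrix.exists_vecMul_eq_zero_iff.mpr hdet
  apply hv0
  have hrowlen : (rowList n d).length = N := Finset.length_sort _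
  have hcollen : (colList n d).length = N := by
    rw [colList, Finset.length_sort, card_LamStar]
  set row : Fin N → ℕ × ℕ := fun i => (rowList n d).getD i.val (0, 0) with hrowdef
  have hrowget : ∀ i : Fin N, row i = (rowList n d)[i.val]'(by rw [hrowlen]; exact i.2) := by
    intro i
    simp only [hrowdef]
    exact List.getD_eq_getElem _ _ (by rw [hrowlen]; exact i.2)
  have hrow_mem : ∀ i : Fin N, row i ∈ Lam n d := by
    intro i
    rw [hrowget]
    exact (Finset.mem_sort _).1 (List.getElem_mem _)
  have hrow_inj : Function.Injective row := by
    intro i j h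
    rw [hrowget, hrowget] at h
    have hnd : (rowList n d).Nodup := Finset.sort_nodup _ _
    exact Fin.ext ((hnd.getElem_inj_iff).1 h)
  -- the column equations
  have hcol : ∀ ν ∈ LamStar n d,
      ∑ i : Fin N, v i *
        (((2 * (n : ℚ) + 1) * (ell n ν : ℚ) - (ell n ν : ℚ) ^ 2) ^ (row i).2 *
          (((ν.1 + ν.2 : ℕ)) : ℚ) ^ ((row i).1 - (row i).2)) = 0 := by
    intro ν hν
    have hmemlist : ν ∈ colList n d := (Finset.mem_sort _).2 hν
    obtain ⟨j0, hj0, hget⟩ := List.mem_iff_getElem.1 hmemlist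
    set j : Fin N := ⟨j0, by rw [← hcollen]; exact hj0⟩ with hj
    have hνj : (colList n d).getD j.val (0, 0) = ν := by
      rw [List.getD_eq_getElem _ _ (by rw [hcollen]; exact j.2)]
      exact hget
    have hvj := congrFun hv j
    simp only [Matrix.vecMul, dotProduct, Matrix.map_apply, Md, hνj,
      Pi.zero_apply] at hvj
    rw [← hvj]
    apply Finset.sum_congr rfl
    intro i _
    simp only [hrowdef]
    congr 1
    simp only [lamPoly, eval_mul, eval_pow, eval_sub, eval_add, eval_C, eval_X,
      eval_one, eval_ofNat]
    push_cast
    ring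
  -- the polynomials q b
  set q : ℕ → Polynomial ℚ := fun b => ∑ i : Fin N,
    if (row i).2 = b then Polynomial.C (v i) * Polynomial.X ^ ((row i).1 - (row i).2)
    else 0 with hqdef
  have hqeval : ∀ (b : ℕ) (x : ℚ), (q b).eval x =
      ∑ i : Fin N, if (row i).2 = b then v i * x ^ ((row i).1 - (row i).2) else 0 := by
    intro b x
    rw [hqdef, eval_finset_sum]
    apply Finset.sum_congr rfl
    intro i _
    split <;> simp
  have hqdeg : ∀ b : ℕ, (q b).natDegree ≤ d - 2 * b := by
    intro b
    apply natDegree_sum_le_of_forall_le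
    intro i _
    split
    · rename_i h
      refine (natDegree_C_mul_le _ _).trans ?_
      rw [natDegree_X_pow]
      have := mem_Lam.1 (hrow_mem i)
      omega
    · simp
  -- the grouping identity
  have hgroup : ∀ (x c : ℚ),
      ∑ b ∈ Finset.range (n + 1), (q b).eval x * c ^ b =
      ∑ i : Fin N, v i * (c ^ (row i).2 * x ^ ((row i).1 - (row i).2)) := by
    intro x c
    have hstep : ∀ b ∈ Finset.range (n + 1), (q b).eval x * c ^ b =
        ∑ i : Fin N, if (row i).2 = b then v i * (c ^ b * x ^ ((row i).1 - (row i).2))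
          else 0 := by
      intro b _
      rw [hqeval, Finset.sum_mul]
      apply Finset.sum_congr rfl
      intro i _
      split <;> ring
    rw [Finset.sum_congr rfl hstep, Finset.sum_comm]
    apply Finset.sum_congr rfl
    intro i _
    have hb : (row i).2 ∈ Finset.range (n + 1) := by
      have := mem_Lam.1 (hrow_mem i); simp only [Finset.mem_range]; omega
    rw [Finset.sum_ite_eq (Finset.range (n + 1)) (row i).2
      (fun b => v i * (c ^ b * x ^ ((row i).1 - (row i).2))), if_pos hb]
  -- main downward induction step
  have main : ∀ b : ℕ, (∀ b', b < b' → q b' = 0) → q b = 0 := by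
    intro b hb'
    by_cases hbig : n < b ∨ d < 2 * b
    · rw [hqdef]
      apply Finset.sum_eq_zero
      intro i _
      have := mem_Lam.1 (hrow_mem i)
      rw [if_neg (by omega)]
    push_neg at hbig
    obtain ⟨hbn, hbd⟩ := hbig
    -- q b vanishes at all natural numbers k with 2b ≤ k ≤ d
    have hevalk : ∀ k : ℕ, 2 * b ≤ k → k ≤ d → (q b).eval (k : ℚ) = 0 := by
      intro k hk1 hk2
      set m : ℕ := min (k / 2) n with hm
      set u : ℚ := 2 * (n : ℚ) + 1 with hu
      set Y : Polynomial ℚ := Polynomial.X * (Polynomial.C u - Polynomial.X) with hY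
      set G : Polynomial ℚ := ∑ b' ∈ Finset.range (b + 1),
        Polynomial.C ((q b').eval (k : ℚ)) * Y ^ b' with hG
      have hYdeg : Y.natDegree ≤ 2 := by
        rw [hY]
        refine (natDegree_mul_le).trans ?_
        have h1 : (Polynomial.C u - Polynomial.X : Polynomial ℚ).natDegree ≤ 1 := by
          refine (natDegree_sub_le _ _).trans ?_
          simp
        simp only [natDegree_X]
        omega
      have hGdeg : G.natDegree ≤ 2 * b := by
        rw [hG]
        apply natDegree_sum_le_of_forall_le
        intro b' hb'mem
        refine (natDegree_C_mul_le _ _).trans ?_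
        refine (natDegree_pow_le).trans ?_
        have hble : b' ≤ b := Nat.lt_succ_iff.1 (Finset.mem_range.1 hb'mem)
        nlinarith [hYdeg]
      -- G vanishes at suitable points
      have hGvan : ∀ (t : ℚ) (r : ℕ), r ≤ m → (t * (u - t) =
          ((k % 2 + 2 * r : ℕ) : ℚ) * (u - ((k % 2 + 2 * r : ℕ) : ℚ))) →
          G.eval t = 0 := by
        intro t r hr hc
        set ν : ℕ × ℕ := (k - (k / 2 - r), k / 2 - r) with hν
        have hνmem : ν ∈ LamStar n d := by rw [mem_LamStar, hν]; dsimp; omega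
        have hνsum : ν.1 + ν.2 = k := by rw [hν]; dsimp; omega
        have hνdiff : ν.1 - ν.2 = k % 2 + 2 * r := by rw [hν]; dsimp; omega
        have htle : k % 2 + 2 * r ≤ 2 * n + 1 := by omega
        have hell : ((2 * (n : ℚ) + 1) * (ell n ν : ℚ) - (ell n ν : ℚ) ^ 2) =
            t * (u - t) := by
          rw [hc, hu]
          simp only [ell, hνdiff]
          exact cval_eq n (k % 2 + 2 * r) htle
        have heq : G.eval t = ∑ b' ∈ Finset.range (n + 1),
            (q b').eval (k : ℚ) * (t * (u - t)) ^ b' := by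
          rw [hG, eval_finset_sum]
          have hz : ∀ b' ∈ Finset.range (n + 1), b' ∉ Finset.range (b + 1) →
              (Polynomial.C ((q b').eval (k : ℚ)) * Y ^ b').eval t = 0 := by
            intro b' _ hb'notin
            have hlt : b < b' := by
              simp only [Finset.mem_range, not_lt] at hb'notin; omega
            rw [hb' b' hlt]
            simp
          rw [Finset.sum_subset (Finset.range_subset_range.2 (by omega : b + 1 ≤ n + 1)) hz]
          apply Finset.sum_congr rfl
          intro b' _
          rw [eval_mul, eval_C, eval_pow, hY, eval_mul, eval_sub, eval_C, eval_X]
        rw [heq, hgroup (k : ℚ) (t * (u - t))]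
        have hc0 := hcol ν hνmem
        rw [← hc0]
        apply Finset.sum_congr rfl
        intro i _
        rw [hell, hνsum]
      -- the finite set of roots
      set S : Finset ℚ := (Finset.range (m + 1)).image (fun r => ((k % 2 + 2 * r : ℕ) : ℚ)) ∪
        (Finset.range (m + 1)).image (fun r => u - ((k % 2 + 2 * r : ℕ) : ℚ)) with hS
      have hf1inj : Function.Injective (fun r : ℕ => ((k % 2 + 2 * r : ℕ) : ℚ)) := by
        intro a b h
        dsimp only at h
        have : (k % 2 + 2 * a : ℕ) = (k % 2 + 2 * b : ℕ) := by exact_mod_cast h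
        omega
      have hf2inj : Function.Injective (fun r : ℕ => u - ((k % 2 + 2 * r : ℕ) : ℚ)) := by
        intro a b h
        have h2 : ((k % 2 + 2 * a : ℕ) : ℚ) = ((k % 2 + 2 * b : ℕ) : ℚ) := by
          dsimp at h; linarith
        have : (k % 2 + 2 * a : ℕ) = (k % 2 + 2 * b : ℕ) := by exact_mod_cast h2
        omega
      have hdisj : Disjoint
          ((Finset.range (m + 1)).image (fun r => ((k % 2 + 2 * r : ℕ) : ℚ)))
          ((Finset.range (m + 1)).image (fun r => u - ((k % 2 + 2 * r : ℕ) : ℚ))) := by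
        rw [Finset.disjoint_left]
        rintro x hx1 hx2
        obtain ⟨r, _, hr⟩ := Finset.mem_image.1 hx1
        obtain ⟨s, _, hs⟩ := Finset.mem_image.1 hx2
        rw [← hr] at hs
        rw [hu] at hs
        have hsum : ((k % 2 + 2 * s) + (k % 2 + 2 * r) : ℕ) = 2 * n + 1 := by
          have : ((k % 2 + 2 * s : ℕ) : ℚ) + ((k % 2 + 2 * r : ℕ) : ℚ)
              = ((2 * n + 1 : ℕ) : ℚ) := by push_cast; push_cast at hs; linarith
          exact_mod_cast this
        omega
      have hScard : S.card = 2 * m + 2 := by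
        rw [hS, Finset.card_union_of_disjoint hdisj,
          Finset.card_image_of_injective _ hf1inj,
          Finset.card_image_of_injective _ hf2inj, Finset.card_range]
        omega
      have hGzero : G = 0 := by
        apply eq_zero_of_natDegree_lt_card_of_eval_eq_zero' G S
        · intro t ht
          rw [hS, Finset.mem_union] at ht
          rcases ht with ht | ht
          · obtain ⟨r, hrmem, hr⟩ := Finset.mem_image.1 ht
            refine hGvan t r (by simp only [Finset.mem_range] at hrmem; omega) ?_
            rw [← hr]
          · obtain ⟨r, hrmem, hr⟩ := Finset.mem_image.1 ht
            refine hGvan t r (by simp only [Finset.mem_range] at hrmem; omega) ?_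
            rw [← hr]
            ring
        · rw [hScard]
          omega
      -- extract the coefficient of degree 2b
      have hcoeff : G.coeff (2 * b) = (q b).eval (k : ℚ) * (-1 : ℚ) ^ b := by
        have hterm : ∀ b' ∈ Finset.range (b + 1), b' ≠ b →
            (Polynomial.C ((q b').eval (k : ℚ)) * Y ^ b').coeff (2 * b) = 0 := by
          intro b' hb'mem hb'ne
          apply coeff_eq_zero_of_natDegree_lt
          have hble : b' ≤ b := Nat.lt_succ_iff.1 (Finset.mem_range.1 hb'mem)
          have hblt : b' < b := lt_of_le_of_ne hble hb'ne
          calc (Polynomial.C ((q b').eval (k : ℚ)) * Y ^ b').natDegree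
              ≤ (Y ^ b').natDegree := natDegree_C_mul_le _ _
            _ ≤ b' * Y.natDegree := natDegree_pow_le
            _ ≤ 2 * b' := by nlinarith [hYdeg]
            _ < 2 * b := by omega
        rw [hG, finset_sum_coeff,
          Finset.sum_eq_single_of_mem b (Finset.self_mem_range_succ b) hterm,
          coeff_C_mul]
        congr 1
        rw [hY, mul_pow, two_mul, coeff_X_pow_mul]
        have hsplit : (Polynomial.C u - Polynomial.X : Polynomial ℚ) ^ b
            = Polynomial.C ((-1 : ℚ) ^ b) * (Polynomial.X - Polynomial.C u) ^ b := by
          rw [← neg_sub, neg_pow]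
          congr 1
          rw [map_pow, map_neg, map_one]
        rw [hsplit, coeff_C_mul]
        have hndeg : ((Polynomial.X - Polynomial.C u) ^ b).natDegree = b := by
          rw [(monic_X_sub_C u).natDegree_pow, natDegree_X_sub_C, mul_one]
        have hcb : ((Polynomial.X - Polynomial.C u) ^ b).coeff b = 1 := by
          have hmono := ((monic_X_sub_C u).pow b).coeff_natDegree
          rwa [hndeg] at hmono
        rw [hcb, mul_one]
      rw [hGzero, coeff_zero] at hcoeff
      have hne : ((-1 : ℚ)) ^ b ≠ 0 := pow_ne_zero _ (by norm_num)
      exact (mul_eq_zero.1 hcoeff.symm).resolve_right hne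
    -- conclude q b = 0
    apply eq_zero_of_natDegree_lt_card_of_eval_eq_zero' (q b)
      ((Finset.range (d - 2 * b + 1)).image (fun r => ((2 * b + r : ℕ) : ℚ)))
    · intro x hx
      obtain ⟨r, hrmem, hr⟩ := Finset.mem_image.1 hx
      rw [← hr]
      exact hevalk (2 * b + r) (by omega)
        (by simp only [Finset.mem_range] at hrmem; omega)
    · rw [Finset.card_image_of_injective, Finset.card_range]
      · exact Nat.lt_succ_of_le (hqdeg b)
      · intro a b' h
        dsimp only at h
        have : (2 * b + a : ℕ) = (2 * b + b' : ℕ) := by exact_mod_cast h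
        omega
  -- all q b vanish
  have hqall : ∀ b : ℕ, q b = 0 := by
    have hstep : ∀ j : ℕ, ∀ b : ℕ, n + 1 - j ≤ b → q b = 0 := by
      intro j
      induction j with
      | zero =>
        intro b hb
        rw [hqdef]
        apply Finset.sum_eq_zero
        intro i _
        have := mem_Lam.1 (hrow_mem i)
        rw [if_neg (by omega)]
      | succ j ih =>
        intro b hb
        rcases Nat.lt_or_ge b (n + 1 - j) with h | h
        · apply main
          intro b' hb'
          apply ih
          omega
        · exact ih b h
    intro b
    rcases Nat.lt_or_ge n b with h | h
    · exact hstep 0 b (by omega)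
    · exact hstep (n + 1 - b) b (by omega)
  -- conclude v = 0
  funext i
  have hq := hqall (row i).2
  have hcoeffv : (q (row i).2).coeff ((row i).1 - (row i).2) = v i := by
    rw [hqdef, finset_sum_coeff,
      Finset.sum_eq_single_of_mem i (Finset.mem_univ i)]
    · rw [if_pos rfl, coeff_C_mul, coeff_X_pow, if_pos rfl, mul_one]
    · intro i' _ hne
      by_cases h : (row i').2 = (row i).2
      · rw [if_pos h, coeff_C_mul, coeff_X_pow]
        have hnediff : ¬((row i).1 - (row i).2 = (row i').1 - (row i').2) := by
          intro hand
          apply hne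
          apply hrow_inj
          have h1 := mem_Lam.1 (hrow_mem i)
          have h2 := mem_Lam.1 (hrow_mem i')
          rw [Prod.ext_iff]
          omega
        rw [if_neg hnediff, mul_zero]
      · rw [if_neg h, coeff_zero]
  rw [hq, coeff_zero] at hcoeffv
  simpa using hcoeffv.symm

/-- For all nonnegative integers `n` and `d`, the evaluation of the polynomial
`det(M_d) ∈ ℤ[x]` at `x = n` is nonzero; equivalently, the integer matrix
`[λ_{μ,ν}(n)]_{μ ∈ Λ_{d,n}, ν ∈ Λ*_{d,n}}` is invertible (as a matrix over `ℚ`). -/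
theorem det_Md_eval_ne_zero (n d : ℕ) :
    (Md n d).det.eval (n : ℤ) ≠ 0 ∧
      IsUnit ((Md n d).map (fun p => ((p.eval (n : ℤ) : ℤ) : ℚ))) := by
  have hmap : ((Md n d).map (fun p => ((p.eval (n : ℤ) : ℤ) : ℚ))).det
      = (((Md n d).det.eval (n : ℤ) : ℤ) : ℚ) := by
    have h1 : (Md n d).map (fun p => ((p.eval (n : ℤ) : ℤ) : ℚ))
        = (Int.castRingHom ℚ).mapMatrix
            ((Polynomial.evalRingHom (n : ℤ)).mapMatrix (Md n d)) := rfl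
    rw [h1, ← RingHom.map_det, ← RingHom.map_det]
    simp
  have hne := det_map_Md_ne_zero n d
  constructor
  · intro h0
    apply hne
    rw [hmap, h0]
    simp
  · rw [Matrix.isUnit_iff_isUnit_det]
    exact isUnit_iff_ne_zero.mpr hne


end Capelli
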